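/- For every integer k ≥ 1, the total domination number of the prism of the cycle of length 6k+1 satisfies γ_t(C_{6k+1} □ K₂) = 2·γ(C_{6k+1}) − 1; equivalently, γ_t(C_{6k+1} □ K₂) = 4k + 1. -/

import Mathlib

open SimpleGraph

/-- The complete graph on two vertices. -/
abbrev K2 : SimpleGraph (Fin 2) := ⊤

/-- `S` is a dominating set of `G`: every vertex not in `S` is adjacent to a vertex of `S`. -/
def IsDominatingSet {V : Type*} (G : SimpleGraph V) (S : Finset V) : Prop :=
  ∀ v : V, v ∉ S → ∃ u ∈ S, G.Adj v u

/-- `S` is a total dominating set of `G`: every vertex is adjacent to a vertex of `S`. -/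
def IsTotalDominatingSet {V : Type*} (G : SimpleGraph V) (S : Finset V) : Prop :=
  ∀ v : V, ∃ u ∈ S, G.Adj v u

/-- The domination number of `G`. -/
noncomputable def dominationNumber {V : Type*} (G : SimpleGraph V) : ℕ :=
  sInf {n : ℕ | ∃ S : Finset V, IsDominatingSet G S ∧ S.card = n}

/-- The total domination number of `G`. -/
noncomputable def totalDominationNumber {V : Type*} (G : SimpleGraph V) : ℕ :=
  sInf {n : ℕ | ∃ S : Finset V, IsTotalDominatingSet G S ∧ S.card = n}

/-
Lower bounds by counting: in a `d`-regular graph a vertex dominates itself and `d` neighbours and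
totally dominates its `d` neighbours, so `γ(C_n) ≥ n / 3` and `γ_t(C_n □ K₂) ≥ 2n / 3`; for
`n = 6k + 1` this gives `γ(C_n) ≥ 2k + 1` and `γ_t(C_n □ K₂) ≥ 4k + 1`. Both bounds are attained by
periodic sets: the multiples of `3` in `C_n`, and, in the prism, the columns `≡ 0, 1 (mod 6)` of
the first copy together with the columns `≡ 3, 4 (mod 6)` of the second copy.
-/

open Finset

namespace SimpleGraph

variable {V : Type*} {G : SimpleGraph V}

theorem IsRegularOfDegree.boxProd {W : Type*} {H : SimpleGraph W} [G.LocallyFinite]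
    [H.LocallyFinite] {d e : ℕ} (hG : G.IsRegularOfDegree d) (hH : H.IsRegularOfDegree e) :
    (G □ H).IsRegularOfDegree (d + e) := fun x => by
  rw [degree_boxProd, hG, hH]

theorem cycleGraph_isRegularOfDegree {n : ℕ} (hn : 3 ≤ n) :
    (cycleGraph n).IsRegularOfDegree 2 := by
  obtain ⟨m, rfl⟩ : ∃ m, n = m + 3 := ⟨n - 3, by omega⟩
  exact fun _ => cycleGraph_degree_three_le

theorem cycleGraph_adj_add_one {n : ℕ} (hn : 1 ≤ n) (v : Fin (n + 1)) :
    (cycleGraph (n + 1)).Adj v (v + 1) := by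
  rw [cycleGraph_adj']
  right
  simp [Nat.mod_eq_of_lt (show 1 < n + 1 by omega)]

theorem cycleGraph_adj_sub_one {n : ℕ} (hn : 1 ≤ n) (v : Fin (n + 1)) :
    (cycleGraph (n + 1)).Adj v (v - 1) := by
  simpa using (cycleGraph_adj_add_one hn (v - 1)).symm

theorem isRegularOfDegree_K2 : K2.IsRegularOfDegree 1 :=
  IsRegularOfDegree.top

end SimpleGraph

open SimpleGraph

section Counting

variable {V : Type*} {G : SimpleGraph V}

theorem dominationNumber_le_card {S : Finset V} (hS : IsDominatingSet G S) :
    dominationNumber G ≤ #S :=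
  Nat.sInf_le ⟨S, hS, rfl⟩

theorem totalDominationNumber_le_card {S : Finset V} (hS : IsTotalDominatingSet G S) :
    totalDominationNumber G ≤ #S :=
  Nat.sInf_le ⟨S, hS, rfl⟩

variable [Fintype V] [G.LocallyFinite] {d : ℕ}

theorem IsDominatingSet.card_le_mul {S : Finset V} (hG : G.IsRegularOfDegree d)
    (hS : IsDominatingSet G S) : Fintype.card V ≤ #S * (d + 1) := by
  classical
  have hcover : (univ : Finset V) ⊆ S.biUnion fun u => insert u (G.neighborFinset u) := by
    intro v _
    by_cases hv : v ∈ S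
    · exact mem_biUnion.2 ⟨v, hv, mem_insert_self _ _⟩
    · obtain ⟨u, hu, hvu⟩ := hS v hv
      exact mem_biUnion.2 ⟨u, hu, mem_insert_of_mem (G.mem_neighborFinset u v |>.2 hvu.symm)⟩
  refine (card_le_card hcover).trans (card_biUnion_le_card_mul _ _ _ fun u _ => ?_)
  exact (card_insert_le _ _).trans_eq (by rw [card_neighborFinset_eq_degree, hG u])

theorem IsTotalDominatingSet.card_le_mul {S : Finset V} (hG : G.IsRegularOfDegree d)
    (hS : IsTotalDominatingSet G S) : Fintype.card V ≤ #S * d := by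
  classical
  have hcover : (univ : Finset V) ⊆ S.biUnion fun u => G.neighborFinset u := by
    intro v _
    obtain ⟨u, hu, hvu⟩ := hS v
    exact mem_biUnion.2 ⟨u, hu, G.mem_neighborFinset u v |>.2 hvu.symm⟩
  refine (card_le_card hcover).trans (card_biUnion_le_card_mul _ _ _ fun u _ => ?_)
  rw [card_neighborFinset_eq_degree, hG u]

theorem card_le_dominationNumber_mul (hG : G.IsRegularOfDegree d) :
    Fintype.card V ≤ dominationNumber G * (d + 1) := by
  obtain ⟨S, hS, hcard⟩ := Nat.sInf_mem (s := {n | ∃ S, IsDominatingSet G S ∧ #S = n})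
    ⟨_, univ, fun v hv => absurd (mem_univ v) hv, rfl⟩
  rw [dominationNumber, ← hcard]
  exact hS.card_le_mul hG

theorem card_le_totalDominationNumber_mul (hG : G.IsRegularOfDegree d) (hd : 0 < d) :
    Fintype.card V ≤ totalDominationNumber G * d := by
  have huniv : IsTotalDominatingSet G univ := fun v => by
    obtain ⟨u, hvu⟩ := (G.degree_pos_iff_exists_adj v).1 (hG v ▸ hd)
    exact ⟨u, mem_univ u, hvu⟩
  obtain ⟨S, hS, hcard⟩ := Nat.sInf_mem (s := {n | ∃ S, IsTotalDominatingSet G S ∧ #S = n})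
    ⟨_, univ, huniv, rfl⟩
  rw [totalDominationNumber, ← hcard]
  exact hS.card_le_mul hG

end Counting

theorem Fin.card_filter_univ_val (n : ℕ) (p : ℕ → Prop) [DecidablePred p] :
    #{v : Fin n | p v} = #{x ∈ range n | p x} := by
  rw [← card_map Fin.valEmbedding]
  congr 1
  ext x
  simp [Fin.exists_iff, and_comm]

def residueClass (n m c : ℕ) : Finset (Fin n) :=
  {v | v.val ≡ c [MOD m]}

theorem mem_residueClass {n m c : ℕ} {v : Fin n} : v ∈ residueClass n m c ↔ v.val % m = c % m := by
  rw [residueClass, mem_filter]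
  exact and_iff_right (mem_univ v)

theorem card_residueClass (n : ℕ) {m : ℕ} (hm : 0 < m) (c : ℕ) :
    #(residueClass n m c) = n / m + if c % m < n % m then 1 else 0 := by
  rw [← Nat.count_modEq_card n hm c, Nat.count_eq_card_filter_range, ← Fin.card_filter_univ_val]
  rfl

theorem isDominatingSet_cycleGraph_residueClass_three {n : ℕ} (hn : 1 ≤ n) :
    IsDominatingSet (cycleGraph (n + 1)) (residueClass (n + 1) 3 0) := by
  intro v hv
  rw [mem_residueClass] at hv
  obtain hprev | hnext : v.val % 3 = 1 ∨ v.val % 3 = 2 := by omega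
  · refine ⟨v - 1, ?_, cycleGraph_adj_sub_one hn v⟩
    simp only [mem_residueClass, Fin.coe_sub_one, Fin.ext_iff, Fin.val_zero]
    split_ifs <;> omega
  · refine ⟨v + 1, ?_, cycleGraph_adj_add_one hn v⟩
    simp only [mem_residueClass, Fin.val_add_one, Fin.ext_iff, Fin.val_last]
    split_ifs <;> omega

/-- Every vertex of a block of six consecutive columns is adjacent to exactly one of the four
vertices chosen in that block. -/
def prismSet (n : ℕ) : Finset (Fin n × Fin 2) :=
  (residueClass n 6 0 ∪ residueClass n 6 1) ×ˢ {0} ∪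
    (residueClass n 6 3 ∪ residueClass n 6 4) ×ˢ {1}

theorem mem_prismSet {n : ℕ} {v : Fin n} {r : Fin 2} :
    (v, r) ∈ prismSet n ↔ (v.val + 3 * r.val) % 6 < 2 := by
  have hr := r.isLt
  simp only [prismSet, mem_union, mem_product, mem_singleton, mem_residueClass, Fin.ext_iff,
    Fin.val_zero, Fin.val_one]
  omega

theorem card_prismSet_le (k : ℕ) : #(prismSet (6 * k + 1)) ≤ 4 * k + 1 := by
  refine (card_union_le _ _).trans ?_
  simp only [card_product, card_singleton, mul_one]
  grw [card_union_le, card_union_le]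
  simp only [card_residueClass _ (show 0 < 6 by norm_num)]
  split_ifs <;> omega

/-- The only vertex dominated across the seam between columns `6k` and `0` is `(6k, 0)`, by
`(0, 0)`, which needs `6k ≡ 0 (mod 6)`. -/
theorem isTotalDominatingSet_prismSet {k : ℕ} (hk : 1 ≤ k) :
    IsTotalDominatingSet (cycleGraph (6 * k + 1) □ K2) (prismSet (6 * k + 1)) := by
  have hn : 1 ≤ 6 * k := by omega
  rintro ⟨v, r⟩
  have hv := v.isLt
  have hr := r.isLt
  obtain hnext | hprev | hacross :
      ((v.val + 3 * r.val) % 6 = 0 ∨ (v.val + 3 * r.val) % 6 = 5) ∨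
      ((v.val + 3 * r.val) % 6 = 1 ∨ (v.val + 3 * r.val) % 6 = 2) ∨
      ((v.val + 3 * r.val) % 6 = 3 ∨ (v.val + 3 * r.val) % 6 = 4) := by omega
  · refine ⟨(v + 1, r), ?_, boxProd_adj_left.2 (cycleGraph_adj_add_one hn v)⟩
    simp only [mem_prismSet, Fin.val_add_one, Fin.ext_iff, Fin.val_last]
    split_ifs <;> omega
  · refine ⟨(v - 1, r), ?_, boxProd_adj_left.2 (cycleGraph_adj_sub_one hn v)⟩
    simp only [mem_prismSet, Fin.coe_sub_one, Fin.ext_iff, Fin.val_zero]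
    split_ifs <;> omega
  · refine ⟨(v, r + 1), ?_, boxProd_adj_right.2 (by simp)⟩
    simp only [mem_prismSet, Fin.val_add_one, Fin.ext_iff, Fin.val_last]
    split_ifs <;> omega

/-- For every `k ≥ 1`, `γ_t(C_{6k+1} □ K₂) = 2 γ(C_{6k+1}) - 1 = 4k + 1`. -/
theorem totalDomination_prism_cycle (k : ℕ) (hk : 1 ≤ k) :
    totalDominationNumber (cycleGraph (6 * k + 1) □ K2) =
        2 * dominationNumber (cycleGraph (6 * k + 1)) - 1 ∧
      totalDominationNumber (cycleGraph (6 * k + 1) □ K2) = 4 * k + 1 := by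
  have hC : (cycleGraph (6 * k + 1)).IsRegularOfDegree 2 :=
    cycleGraph_isRegularOfDegree (by omega)
  have hγ : dominationNumber (cycleGraph (6 * k + 1)) = 2 * k + 1 := by
    have hlower := card_le_dominationNumber_mul hC
    have hupper := dominationNumber_le_card (isDominatingSet_cycleGraph_residueClass_three
      (show 1 ≤ 6 * k by omega))
    rw [card_residueClass _ (by norm_num)] at hupper
    rw [Fintype.card_fin] at hlower
    split_ifs at hupper <;> omega
  have hγt : totalDominationNumber (cycleGraph (6 * k + 1) □ K2) = 4 * k + 1 := by
    have hlower := card_le_totalDominationNumber_mul (hC.boxProd isRegularOfDegree_K2) (by norm_num)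
    have hupper := (totalDominationNumber_le_card (isTotalDominatingSet_prismSet hk)).trans
      (card_prismSet_le k)
    rw [Fintype.card_prod, Fintype.card_fin, Fintype.card_fin] at hlower
    omega
  exact ⟨by omega, hγt⟩
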